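/- arXiv:1803.09552 — 2 statements merged into one kernel-verified Lean document; each statement's English description precedes it below -/
import Mathlib

section
/- Let $k \geq 1$ and $i_j$ an integer with $1 \leq i_j \leq k$. Define $P_{i_j}(\lambda) = \prod_{c=1}^{i_j} \frac{k\lambda - c + 1}{c}$. Then for all $\lambda \in [0, i_j/k]$, $|P_{i_j}(\lambda)| \leq 1$. -/
open Finset

lemma reflect_prod (m : ℕ) :
    ∏ c ∈ Finset.Icc 1 m, ((m : ℝ) + 1 - c) = ∏ c ∈ Finset.Icc 1 m, (c : ℝ) := by
  apply Finset.prod_nbij' (fun c => m + 1 - c) (fun c => m + 1 - c)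
  · intro a ha; simp only [Finset.mem_Icc] at *; omega
  · intro a ha; simp only [Finset.mem_Icc] at *; omega
  · intro a ha; simp only [Finset.mem_Icc] at ha; omega
  · intro a ha; simp only [Finset.mem_Icc] at ha; omega
  · intro a ha
    simp only [Finset.mem_Icc] at ha
    have : ((m + 1 - a : ℕ) : ℝ) = (m : ℝ) + 1 - a := by
      push_cast [Nat.cast_sub (by omega : a ≤ m + 1)]; ring
    rw [this]

lemma binom_prod_one (m : ℕ) :
    ∏ c ∈ Finset.Icc 1 m, ((m : ℝ) + 1 - c) / c = 1 := by
  rw [Finset.prod_div_distrib, reflect_prod]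
  apply div_self
  apply Finset.prod_ne_zero_iff.mpr
  intro c hc
  simp only [Finset.mem_Icc] at hc
  exact Nat.cast_ne_zero.mpr (by omega)

lemma key (n : ℕ) : ∀ x : ℝ, 0 ≤ x → x ≤ n →
    ∏ c ∈ Finset.Icc 1 n, |x - c + 1| / c ≤ 1 := by
  induction n with
  | zero => intro x _ _; simp
  | succ n ih =>
    intro x hx0 hxn
    by_cases h : x ≤ n
    · rw [Finset.prod_Icc_succ_top (by omega)]
      have h1 := ih x hx0 h
      have h2 : |x - (↑(n + 1) : ℝ) + 1| / (↑(n + 1) : ℝ) ≤ 1 := by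
        rw [div_le_one (by positivity)]
        push_cast
        rw [abs_le]
        constructor <;> nlinarith
      have hnn : (0:ℝ) ≤ ∏ c ∈ Finset.Icc 1 n, |x - c + 1| / c := by
        apply Finset.prod_nonneg
        intro c hc; positivity
      nlinarith [abs_nonneg (x - (↑(n+1):ℝ) + 1)]
    · push_neg at h
      calc ∏ c ∈ Finset.Icc 1 (n + 1), |x - c + 1| / c
          ≤ ∏ c ∈ Finset.Icc 1 (n + 1), ((↑(n + 1) : ℝ) + 1 - c) / c := by
            apply Finset.prod_le_prod
            · intro c hc; positivity
            · intro c hc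
              simp only [Finset.mem_Icc] at hc
              have hc1 : (1:ℝ) ≤ c := by exact_mod_cast hc.1
              have hc2 : (c:ℝ) ≤ n + 1 := by exact_mod_cast hc.2
              apply div_le_div_of_nonneg_right _ (by linarith) |>.trans_eq rfl
              · rw [abs_of_nonneg (by push_cast at hxn ⊢; linarith)]
                push_cast at hxn ⊢
                linarith
        _ = 1 := binom_prod_one (n + 1)

theorem aux_polynomial_bound (k ij : ℕ) (hk : 1 ≤ k) (hij1 : 1 ≤ ij) (hijk : ij ≤ k)
    (P : ℝ → ℝ)
    (hP : ∀ lam, P lam = ∏ c ∈ Finset.Icc 1 ij, ((k : ℝ) * lam - c + 1) / c) :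
    ∀ lam ∈ Set.Icc (0 : ℝ) ((ij : ℝ) / k), |P lam| ≤ 1 := by
  intro lam hlam
  obtain ⟨h0, h1⟩ := hlam
  have hk' : (0:ℝ) < k := by exact_mod_cast hk
  have hx0 : 0 ≤ (k:ℝ) * lam := by positivity
  have hxn : (k:ℝ) * lam ≤ ij := by
    have := (le_div_iff₀ hk').mp h1
    linarith
  rw [hP, abs_le]
  have habs : |∏ c ∈ Finset.Icc 1 ij, ((k : ℝ) * lam - c + 1) / c|
      ≤ ∏ c ∈ Finset.Icc 1 ij, |(k : ℝ) * lam - c + 1| / c := by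
    rw [Finset.abs_prod]
    apply le_of_eq
    apply Finset.prod_congr rfl
    intro c hc
    simp only [Finset.mem_Icc] at hc
    rw [abs_div, abs_of_nonneg (by positivity : (0:ℝ) ≤ (c:ℝ))]
  have hkey := key ij ((k:ℝ) * lam) hx0 hxn
  have := habs.trans hkey
  rw [abs_le] at this
  exact this
end

section
/- Let $k \geq 1$ and $i_j \geq 1$. Define $P_{i_j}(\lambda) = \frac{1}{i_j!} \prod_{c=0}^{i_j-1}(k\lambda - c)$. Then for all $\lambda$ with $k\lambda \in [0, i_j]$ and $i_j \leq k$, the derivative satisfies $|P_{i_j}'(\lambda)| \leq k^2$. -/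
/-!
The derivative is `k / m! * ∑ r, ∏_{c ≠ r} (k λ - c)` with `m = ij`. With `x = kλ` between
consecutive integers `n ≤ x ≤ n + 1`, each factor satisfies `|x - c| ≤ n + 1 - c` for `c ≤ n`
and `|x - c| ≤ c - n` for `c > n`; these bounds are `≥ 1`, so any subproduct is at most
`(n + 1)! (m - n - 1)! ≤ m!`. Hence `|P'(λ)| ≤ k m ≤ k²`.
-/

open Finset
open scoped Nat

/-- Distance from `c` to the farther endpoint of `[n, n + 1]`. -/
def farEndpointDist (n c : ℕ) : ℕ := if c ≤ n then n + 1 - c else c - n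

lemma one_le_farEndpointDist (n c : ℕ) : 1 ≤ farEndpointDist n c := by
  unfold farEndpointDist; split_ifs <;> omega

lemma abs_sub_natCast_le_farEndpointDist {x : ℝ} {n : ℕ} (hnx : n ≤ x) (hxn : x ≤ n + 1)
    (c : ℕ) : |x - c| ≤ farEndpointDist n c := by
  unfold farEndpointDist
  split_ifs with hc
  · have hc' : (c : ℝ) ≤ n := by exact_mod_cast hc
    rw [Nat.cast_sub (by omega), abs_of_nonneg (by linarith)]
    push_cast; linarith
  · have hc' : (n : ℝ) + 1 ≤ c := by exact_mod_cast (by omega : n + 1 ≤ c)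
    rw [Nat.cast_sub (by omega), abs_of_nonpos (by linarith)]
    linarith

lemma prod_range_farEndpointDist (n j : ℕ) :
    ∏ c ∈ range (n + 1 + j), farEndpointDist n c = (n + 1)! * j ! := by
  rw [prod_range_add, ← prod_range_reflect, ← prod_range_add_one_eq_factorial,
    ← prod_range_add_one_eq_factorial]
  congr 1 <;> refine prod_congr rfl fun c hc => ?_ <;> rw [mem_range] at hc <;>
    unfold farEndpointDist <;> split_ifs <;> omega

lemma prod_abs_sub_natCast_le_factorial {x : ℝ} {m : ℕ} (hx0 : 0 ≤ x) (hxm : x ≤ m)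
    {s : Finset ℕ} (hs : s ⊆ range m) : ∏ c ∈ s, |x - c| ≤ (m ! : ℝ) := by
  rcases Nat.eq_zero_or_pos m with rfl | hm
  · simp [subset_empty.mp hs]
  -- `n` is an integer with `n ≤ x ≤ n + 1` and `n < m`.
  set n := min ⌊x⌋₊ (m - 1)
  have hnm : n + 1 + (m - n - 1) = m := by omega
  have hnx : (n : ℝ) ≤ x := ((Nat.cast_le.mpr (min_le_left _ _)).trans (Nat.floor_le hx0))
  have hxn : x ≤ n + 1 := by
    rcases le_total ⌊x⌋₊ (m - 1) with h | h
    · rw [show n = ⌊x⌋₊ from min_eq_left h]; exact (Nat.lt_floor_add_one x).le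
    · rw [show n = m - 1 from min_eq_right h, Nat.cast_sub hm, Nat.cast_one]; linarith
  calc ∏ c ∈ s, |x - c|
      ≤ ∏ c ∈ s, (farEndpointDist n c : ℝ) :=
        prod_le_prod (fun _ _ => abs_nonneg _)
          fun c _ => abs_sub_natCast_le_farEndpointDist hnx hxn c
    _ ≤ ((∏ c ∈ range m, farEndpointDist n c : ℕ) : ℝ) := by
        push_cast
        exact_mod_cast prod_le_prod_of_subset_of_one_le' hs
          fun c _ _ => one_le_farEndpointDist n c
    _ ≤ (m ! : ℝ) := by
        rw [← hnm, prod_range_farEndpointDist]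
        exact_mod_cast Nat.le_of_dvd (Nat.factorial_pos _)
          (Nat.factorial_mul_factorial_dvd_factorial_add _ _)

lemma abs_sum_prod_erase_sub_le {x : ℝ} {m : ℕ} (hx0 : 0 ≤ x) (hxm : x ≤ m) :
    |∑ r ∈ range m, ∏ c ∈ (range m).erase r, (x - c)| ≤ m * (m ! : ℝ) :=
  calc |∑ r ∈ range m, ∏ c ∈ (range m).erase r, (x - c)|
      ≤ ∑ r ∈ range m, ∏ c ∈ (range m).erase r, |x - c| := by
        simpa only [abs_prod] using
          abs_sum_le_sum_abs (fun r => ∏ c ∈ (range m).erase r, (x - c)) (range m)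
    _ ≤ ∑ _r ∈ range m, (m ! : ℝ) :=
        sum_le_sum fun r _ => prod_abs_sub_natCast_le_factorial hx0 hxm (erase_subset r _)
    _ = m * (m ! : ℝ) := by rw [sum_const, card_range, nsmul_eq_mul]

lemma hasDerivAt_prod_mul_sub (a lam : ℝ) (s : Finset ℕ) :
    HasDerivAt (fun l => ∏ c ∈ s, (a * l - c))
      (a * ∑ r ∈ s, ∏ c ∈ s.erase r, (a * lam - c)) lam := by
  have h := HasDerivAt.fun_finsetProd (u := s) (f := fun c l => a * l - c)
    (f' := fun _ => a) (x := lam)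
    fun c _ => by simpa using ((hasDerivAt_id lam).const_mul a).sub_const (c : ℝ)
  simpa only [smul_eq_mul, ← sum_mul, mul_comm a] using h

theorem aux_polynomial_deriv_bound_general (k ij : ℕ) (hijk : ij ≤ k)
    (P : ℝ → ℝ)
    (hP : ∀ lam, P lam = (1 / (Nat.factorial ij : ℝ)) * ∏ c ∈ Finset.range ij, ((k : ℝ) * lam - c)) :
    ∀ lam : ℝ, (k : ℝ) * lam ∈ Set.Icc (0 : ℝ) (ij : ℝ) → |deriv P lam| ≤ (k : ℝ) ^ 2 := by
  rintro lam ⟨hx0, hxm⟩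
  have hderiv := (hasDerivAt_prod_mul_sub (k : ℝ) lam (range ij)).const_mul
    (1 / (ij ! : ℝ))
  rw [← funext hP] at hderiv
  have hfac : (0 : ℝ) < ij ! := by exact_mod_cast Nat.factorial_pos ij
  have hij : (ij : ℝ) ≤ k := by exact_mod_cast hijk
  rw [hderiv.deriv, abs_mul, abs_mul, abs_of_pos (by positivity), Nat.abs_cast]
  calc 1 / (ij ! : ℝ) * (k * |∑ r ∈ range ij, ∏ c ∈ (range ij).erase r, (k * lam - c)|)
      ≤ 1 / (ij ! : ℝ) * (k * (ij * ij !)) := by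
        gcongr; exact abs_sum_prod_erase_sub_le hx0 hxm
    _ = k * ij := by field_simp
    _ ≤ (k : ℝ) ^ 2 := by rw [sq]; gcongr

theorem aux_polynomial_deriv_bound (k ij : ℕ) (hk : 1 ≤ k) (hij1 : 1 ≤ ij) (hijk : ij ≤ k)
    (P : ℝ → ℝ)
    (hP : ∀ lam, P lam = (1 / (Nat.factorial ij : ℝ)) * ∏ c ∈ Finset.range ij, ((k : ℝ) * lam - c)) :
    ∀ lam : ℝ, (k : ℝ) * lam ∈ Set.Icc (0 : ℝ) (ij : ℝ) → |deriv P lam| ≤ (k : ℝ) ^ 2 :=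
  aux_polynomial_deriv_bound_general k ij hijk P hP
end
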